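/- Poisson subsampling amplification for (ε,δ)-DP: if a mechanism M is (ε₀, δ₀)-DP on any fixed minibatch, then the mechanism M' that first includes each record independently with probability q and then applies M satisfies (ε, δ)-DP with ε = ln(1 + q(e^{ε₀} − 1)) and δ = q·δ₀. -/
import Mathlib


open MeasureTheory

variable {X : Type*} [DecidableEq X] {Ω : Type*} [MeasurableSpace Ω]

/-- Add/remove adjacency: the two datasets differ in exactly one record. -/
def AdjacentDS (D D' : Finset X) : Prop :=
  (∃ x ∉ D', D = insert x D') ∨ (∃ x ∉ D, D' = insert x D)

/-- `(ε, δ)`-differential privacy of a mechanism on finite datasets. -/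
def IsDP (M : Finset X → Measure Ω) (ε δ : ℝ) : Prop :=
  ∀ D D' : Finset X, AdjacentDS D D' → ∀ S : Set Ω, MeasurableSet S →
    M D S ≤ ENNReal.ofReal (Real.exp ε) * M D' S + ENNReal.ofReal δ

/-- Poisson subsampling at rate `q`: each record is included independently with
probability `q`, and the base mechanism is run on the resulting subsample. -/
noncomputable def poissonSubsample (M : Finset X → Measure Ω) (q : ℝ)
    (D : Finset X) : Measure Ω :=
  ∑ S ∈ D.powerset,
    (ENNReal.ofReal (q ^ S.card * (1 - q) ^ (D.card - S.card))) • M S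

open scoped ENNReal

/-- Split a weighted sum over the powerset of `insert x D` into the part
excluding `x` and the part including `x`. -/
lemma weight_split {X : Type*} [DecidableEq X] (q : ℝ) (hq0 : 0 ≤ q) (hq1 : q ≤ 1)
    {x : X} {D : Finset X} (hx : x ∉ D) (g : Finset X → ℝ≥0∞) :
    ∑ T ∈ (insert x D).powerset,
        ENNReal.ofReal (q ^ T.card * (1 - q) ^ ((insert x D).card - T.card)) * g T
      = ENNReal.ofReal (1 - q) *
          ∑ T ∈ D.powerset, ENNReal.ofReal (q ^ T.card * (1 - q) ^ (D.card - T.card)) * g T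
        + ENNReal.ofReal q *
          ∑ T ∈ D.powerset,
            ENNReal.ofReal (q ^ T.card * (1 - q) ^ (D.card - T.card)) * g (insert x T) := by
  have h1q : 0 ≤ 1 - q := by linarith
  have hdisj : Disjoint D.powerset (Finset.image (insert x) D.powerset) := by
    rw [Finset.disjoint_left]
    intro T hT hT'
    rw [Finset.mem_powerset] at hT
    rcases Finset.mem_image.1 hT' with ⟨U, _, hU⟩
    exact hx (hT (hU ▸ Finset.mem_insert_self x U))
  have hinj : ∀ T₁ ∈ D.powerset, ∀ T₂ ∈ D.powerset,
      insert x T₁ = insert x T₂ → T₁ = T₂ := by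
    intro T₁ h₁ T₂ h₂ h
    rw [Finset.mem_powerset] at h₁ h₂
    have hx₁ : x ∉ T₁ := fun hh => hx (h₁ hh)
    have hx₂ : x ∉ T₂ := fun hh => hx (h₂ hh)
    have := congrArg (Finset.erase · x) h
    simpa [Finset.erase_insert hx₁, Finset.erase_insert hx₂] using this
  rw [Finset.powerset_insert, Finset.sum_union hdisj, Finset.sum_image hinj]
  congr 1
  · rw [Finset.mul_sum]
    refine Finset.sum_congr rfl fun T hT => ?_
    rw [Finset.mem_powerset] at hT
    have hc : T.card ≤ D.card := Finset.card_le_card hT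
    rw [Finset.card_insert_of_notMem hx]
    have he : D.card + 1 - T.card = (D.card - T.card) + 1 := by omega
    rw [he, show q ^ T.card * (1 - q) ^ (D.card - T.card + 1)
        = (1 - q) * (q ^ T.card * (1 - q) ^ (D.card - T.card)) by ring,
      ENNReal.ofReal_mul h1q, mul_assoc]
  · rw [Finset.mul_sum]
    refine Finset.sum_congr rfl fun T hT => ?_
    rw [Finset.mem_powerset] at hT
    have hc : T.card ≤ D.card := Finset.card_le_card hT
    have hxT : x ∉ T := fun hh => hx (hT hh)
    rw [Finset.card_insert_of_notMem hx, Finset.card_insert_of_notMem hxT]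
    have he : D.card + 1 - (T.card + 1) = D.card - T.card := by omega
    rw [he, show q ^ (T.card + 1) * (1 - q) ^ (D.card - T.card)
        = q * (q ^ T.card * (1 - q) ^ (D.card - T.card)) by ring,
      ENNReal.ofReal_mul hq0, mul_assoc]

/-- The subsampling weights sum to `1`. -/
lemma weight_sum {X : Type*} [DecidableEq X] (q : ℝ) (hq0 : 0 ≤ q) (hq1 : q ≤ 1)
    (D : Finset X) :
    ∑ T ∈ D.powerset, ENNReal.ofReal (q ^ T.card * (1 - q) ^ (D.card - T.card)) = 1 := by
  have h1q : 0 ≤ 1 - q := by linarith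
  induction D using Finset.induction_on with
  | empty => simp
  | @insert x D hx ih =>
    have h := weight_split q hq0 hq1 hx (fun _ => (1 : ℝ≥0∞))
    simp only [mul_one] at h
    rw [h, ih, mul_one, mul_one, ← ENNReal.ofReal_add h1q hq0,
      show (1 - q) + q = 1 by ring, ENNReal.ofReal_one]

/-- Poisson subsampling amplification for `(ε,δ)`-DP.  If `M` is
`(ε₀, δ₀)`-DP on any fixed minibatch, then the Poisson-subsampled mechanism at
rate `q` is `(ln(1 + q(e^{ε₀} − 1)), q·δ₀)`-DP. -/
theorem poisson_subsampling_amplification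
    (M : Finset X → Measure Ω) (hprob : ∀ D, IsProbabilityMeasure (M D))
    (ε₀ δ₀ q : ℝ) (hε₀ : 0 ≤ ε₀) (hδ₀ : 0 ≤ δ₀) (hq0 : 0 ≤ q) (hq1 : q ≤ 1)
    (hM : IsDP M ε₀ δ₀) :
    IsDP (poissonSubsample M q) (Real.log (1 + q * (Real.exp ε₀ - 1))) (q * δ₀) := by
  intro D D' hadj S hS
  have h1q : 0 ≤ 1 - q := by linarith
  set c : ℝ := Real.exp ε₀ with hc
  have hc1 : 1 ≤ c := Real.one_le_exp hε₀
  have hc0 : 0 ≤ c := by linarith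
  have heεpos : (0 : ℝ) < 1 + q * (c - 1) := by nlinarith
  have heε0 : (0 : ℝ) ≤ 1 + q * (c - 1) := le_of_lt heεpos
  rw [Real.exp_log heεpos]
  -- evaluate the subsampled measure on a set
  have heval : ∀ (E : Finset X),
      poissonSubsample M q E S
        = ∑ T ∈ E.powerset,
            ENNReal.ofReal (q ^ T.card * (1 - q) ^ (E.card - T.card)) * M T S := by
    intro E
    simp [poissonSubsample, Measure.coe_finset_sum, Finset.sum_apply,
      Measure.smul_apply, smul_eq_mul]
  have key : ∀ (E : Finset X) (x : X), x ∉ E →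
      (poissonSubsample M q (insert x E) S
          ≤ ENNReal.ofReal (1 + q * (c - 1)) * poissonSubsample M q E S
            + ENNReal.ofReal (q * δ₀)) ∧
      (poissonSubsample M q E S
          ≤ ENNReal.ofReal (1 + q * (c - 1)) * poissonSubsample M q (insert x E) S
            + ENNReal.ofReal (q * δ₀)) := by
    intro E x hx
    set A : ℝ≥0∞ := poissonSubsample M q E S with hA
    set B : ℝ≥0∞ := ∑ T ∈ E.powerset,
        ENNReal.ofReal (q ^ T.card * (1 - q) ^ (E.card - T.card)) * M (insert x T) S with hB
    have hsplit : poissonSubsample M q (insert x E) S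
        = ENNReal.ofReal (1 - q) * A + ENNReal.ofReal q * B := by
      rw [hA, heval (insert x E), heval E,
        weight_split q hq0 hq1 hx (fun T => M T S)]
    -- boundedness
    have hsum_le : ∀ (f : Finset X → ℝ≥0∞), (∀ T ∈ E.powerset, f T ≤ 1) →
        (∑ T ∈ E.powerset,
          ENNReal.ofReal (q ^ T.card * (1 - q) ^ (E.card - T.card)) * f T) ≤ 1 := by
      intro f hf
      calc (∑ T ∈ E.powerset,
            ENNReal.ofReal (q ^ T.card * (1 - q) ^ (E.card - T.card)) * f T)
          ≤ ∑ T ∈ E.powerset,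
            ENNReal.ofReal (q ^ T.card * (1 - q) ^ (E.card - T.card)) * 1 :=
            Finset.sum_le_sum fun T hT => mul_le_mul_right (hf T hT) _
        _ = 1 := by
            simp only [mul_one]
            exact weight_sum q hq0 hq1 E
    have hA1 : A ≤ 1 := by
      rw [hA, heval E]
      exact hsum_le _ fun T _ => (by haveI := hprob T; exact prob_le_one)
    have hB1 : B ≤ 1 := by
      rw [hB]
      exact hsum_le _ fun T _ => (by haveI := hprob (insert x T); exact prob_le_one)
    have hAne : A ≠ ⊤ := ne_top_of_le_ne_top ENNReal.one_ne_top hA1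
    have hBne : B ≠ ⊤ := ne_top_of_le_ne_top ENNReal.one_ne_top hB1
    -- termwise DP in both directions, summed
    have hxT : ∀ T ∈ E.powerset, x ∉ T := by
      intro T hT hh
      exact hx (Finset.mem_powerset.1 hT hh)
    have hBA : B ≤ ENNReal.ofReal c * A + ENNReal.ofReal δ₀ := by
      rw [hB, hA, heval E]
      calc (∑ T ∈ E.powerset,
            ENNReal.ofReal (q ^ T.card * (1 - q) ^ (E.card - T.card)) * M (insert x T) S)
          ≤ ∑ T ∈ E.powerset,
            ENNReal.ofReal (q ^ T.card * (1 - q) ^ (E.card - T.card)) *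
              (ENNReal.ofReal c * M T S + ENNReal.ofReal δ₀) :=
            Finset.sum_le_sum fun T hT => mul_le_mul_right
              (hM (insert x T) T (Or.inl ⟨x, hxT T hT, rfl⟩) S hS) _
        _ = ENNReal.ofReal c * (∑ T ∈ E.powerset,
              ENNReal.ofReal (q ^ T.card * (1 - q) ^ (E.card - T.card)) * M T S)
            + (∑ T ∈ E.powerset,
              ENNReal.ofReal (q ^ T.card * (1 - q) ^ (E.card - T.card))) * ENNReal.ofReal δ₀ := by
            rw [Finset.mul_sum, Finset.sum_mul, ← Finset.sum_add_distrib]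
            exact Finset.sum_congr rfl fun T hT => by ring
        _ = ENNReal.ofReal c * (∑ T ∈ E.powerset,
              ENNReal.ofReal (q ^ T.card * (1 - q) ^ (E.card - T.card)) * M T S)
            + ENNReal.ofReal δ₀ := by rw [weight_sum q hq0 hq1 E, one_mul]
    have hAB : A ≤ ENNReal.ofReal c * B + ENNReal.ofReal δ₀ := by
      rw [hB, hA, heval E]
      calc (∑ T ∈ E.powerset,
            ENNReal.ofReal (q ^ T.card * (1 - q) ^ (E.card - T.card)) * M T S)
          ≤ ∑ T ∈ E.powerset,
            ENNReal.ofReal (q ^ T.card * (1 - q) ^ (E.card - T.card)) *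
              (ENNReal.ofReal c * M (insert x T) S + ENNReal.ofReal δ₀) :=
            Finset.sum_le_sum fun T hT => mul_le_mul_right
              (hM T (insert x T) (Or.inr ⟨x, hxT T hT, rfl⟩) S hS) _
        _ = ENNReal.ofReal c * (∑ T ∈ E.powerset,
              ENNReal.ofReal (q ^ T.card * (1 - q) ^ (E.card - T.card)) * M (insert x T) S)
            + (∑ T ∈ E.powerset,
              ENNReal.ofReal (q ^ T.card * (1 - q) ^ (E.card - T.card))) * ENNReal.ofReal δ₀ := by
            rw [Finset.mul_sum, Finset.sum_mul, ← Finset.sum_add_distrib]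
            exact Finset.sum_congr rfl fun T hT => by ring
        _ = ENNReal.ofReal c * (∑ T ∈ E.powerset,
              ENNReal.ofReal (q ^ T.card * (1 - q) ^ (E.card - T.card)) * M (insert x T) S)
            + ENNReal.ofReal δ₀ := by rw [weight_sum q hq0 hq1 E, one_mul]
    -- pass to real numbers
    set a : ℝ := A.toReal with ha
    set b : ℝ := B.toReal with hb
    have ha0 : 0 ≤ a := ENNReal.toReal_nonneg
    have hb0 : 0 ≤ b := ENNReal.toReal_nonneg
    have hAa : A = ENNReal.ofReal a := (ENNReal.ofReal_toReal hAne).symm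
    have hBb : B = ENNReal.ofReal b := (ENNReal.ofReal_toReal hBne).symm
    have hcAne : ENNReal.ofReal c * A + ENNReal.ofReal δ₀ ≠ ⊤ :=
      ENNReal.add_ne_top.2 ⟨ENNReal.mul_ne_top ENNReal.ofReal_ne_top hAne, ENNReal.ofReal_ne_top⟩
    have hcBne : ENNReal.ofReal c * B + ENNReal.ofReal δ₀ ≠ ⊤ :=
      ENNReal.add_ne_top.2 ⟨ENNReal.mul_ne_top ENNReal.ofReal_ne_top hBne, ENNReal.ofReal_ne_top⟩
    have hba : b ≤ c * a + δ₀ := by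
      have := ENNReal.toReal_mono hcAne hBA
      rwa [ENNReal.toReal_add (ENNReal.mul_ne_top ENNReal.ofReal_ne_top hAne)
        ENNReal.ofReal_ne_top, ENNReal.toReal_mul, ENNReal.toReal_ofReal hc0,
        ENNReal.toReal_ofReal hδ₀] at this
    have hab : a ≤ c * b + δ₀ := by
      have := ENNReal.toReal_mono hcBne hAB
      rwa [ENNReal.toReal_add (ENNReal.mul_ne_top ENNReal.ofReal_ne_top hBne)
        ENNReal.ofReal_ne_top, ENNReal.toReal_mul, ENNReal.toReal_ofReal hc0,
        ENNReal.toReal_ofReal hδ₀] at this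
    constructor
    · rw [hsplit]
      calc ENNReal.ofReal (1 - q) * A + ENNReal.ofReal q * B
          = ENNReal.ofReal ((1 - q) * a + q * b) := by
            rw [hAa, hBb, ← ENNReal.ofReal_mul h1q, ← ENNReal.ofReal_mul hq0,
              ENNReal.ofReal_add (mul_nonneg h1q ha0) (mul_nonneg hq0 hb0)]
        _ ≤ ENNReal.ofReal ((1 + q * (c - 1)) * a + q * δ₀) :=
            ENNReal.ofReal_le_ofReal (by nlinarith [mul_le_mul_of_nonneg_left hba hq0])
        _ ≤ ENNReal.ofReal ((1 + q * (c - 1)) * a) + ENNReal.ofReal (q * δ₀) :=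
            ENNReal.ofReal_add_le
        _ = ENNReal.ofReal (1 + q * (c - 1)) * A + ENNReal.ofReal (q * δ₀) := by
            rw [ENNReal.ofReal_mul heε0, ← hAa]
    · rw [hsplit]
      have hG : 0 ≤ (1 + q * (c - 1)) * ((1 - q) * a + q * b) + q * δ₀ - a := by
        have hid : c * ((1 + q * (c - 1)) * ((1 - q) * a + q * b) + q * δ₀ - a)
            = q * (1 + q * (c - 1)) * (c * b + δ₀ - a)
              + q * (1 - q) * (c - 1) ^ 2 * a + q * (1 - q) * (c - 1) * δ₀ := by ring
        have h1 : 0 ≤ q * (1 + q * (c - 1)) * (c * b + δ₀ - a) :=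
          mul_nonneg (mul_nonneg hq0 heε0) (by linarith)
        have h2 : 0 ≤ q * (1 - q) * (c - 1) ^ 2 * a :=
          mul_nonneg (mul_nonneg (mul_nonneg hq0 h1q) (sq_nonneg _)) ha0
        have h3 : 0 ≤ q * (1 - q) * (c - 1) * δ₀ :=
          mul_nonneg (mul_nonneg (mul_nonneg hq0 h1q) (by linarith)) hδ₀
        nlinarith [hid, h1, h2, h3]
      calc A = ENNReal.ofReal a := hAa
        _ ≤ ENNReal.ofReal ((1 + q * (c - 1)) * ((1 - q) * a + q * b) + q * δ₀) :=
            ENNReal.ofReal_le_ofReal (by linarith)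
        _ ≤ ENNReal.ofReal ((1 + q * (c - 1)) * ((1 - q) * a + q * b))
            + ENNReal.ofReal (q * δ₀) := ENNReal.ofReal_add_le
        _ = ENNReal.ofReal (1 + q * (c - 1)) *
              (ENNReal.ofReal (1 - q) * A + ENNReal.ofReal q * B)
            + ENNReal.ofReal (q * δ₀) := by
            rw [ENNReal.ofReal_mul heε0,
              ENNReal.ofReal_add (mul_nonneg h1q ha0) (mul_nonneg hq0 hb0),
              ENNReal.ofReal_mul h1q, ENNReal.ofReal_mul hq0, ← hAa, ← hBb]
  rcases hadj with ⟨x, hx, rfl⟩ | ⟨x, hx, rfl⟩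
  · exact (key D' x hx).1
  · exact (key D x hx).2
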